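/- arXiv:2602.20381 — 4 statements merged into one kernel-verified Lean document; each statement's English description precedes it below -/
import Mathlib

section
/- Let $p \geq 1$, let $a : \mathbb{R}^n \to \mathbb{R}^m$ be an affine map, let $B \subset \mathbb{R}^n$ be a ball and $E \subset B$ a Borel set with $|E| > 0$. Then $\left(\frac{1}{|E|}\int_E |a(x)|^p\,dx\right)^{1/p} \geq C^{-1} \|a\|_{L^\infty(B)} \cdot \frac{|E|}{|B|}$, where $C \geq 1$ is a constant depending only on $n$, $m$, $p$. -/
/-!
Let `y` be a point of the closed ball where `‖a‖` is maximal. Pairing `a` with the unit vector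
in the direction of `a y` gives a scalar affine function `f` with `|f| ≤ ‖a‖` and `|f y| = ‖a y‖`.
Either `∇f` is small and `|f| ≥ |f y| / 2` on the whole ball, or the sublevel set `{|f| ≤ t}`
lies in a slab of width `≲ t R / |f y|`; in both cases
`|{x ∈ B : ‖a x‖ ≤ t}| ≲ (t / ‖a y‖) |B|`. Taking `t ≈ ‖a y‖ |E| / |B|` makes this at most
`|E| / 2`, so `‖a‖ > t` on half of `E` and the `p`-average of `‖a‖` over `E` is at least `t / 2`.
-/

open MeasureTheory Metric Set Module
open scoped ENNReal RealInnerProductSpace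

theorem div_two_le_rpow_average_of_measureReal_sublevel_le_half {α : Type*} [MeasurableSpace α]
    {μ : Measure α} {E : Set α} {g : α → ℝ} {p t : ℝ} (hp : 1 ≤ p) (ht : 0 ≤ t)
    (hg : ∀ x, 0 ≤ g x) (hgp : IntegrableOn (fun x => g x ^ p) E μ) (hE : μ E ≠ ∞)
    (hE0 : μ E ≠ 0) (hsmall : μ.real {x ∈ E | g x ≤ t} ≤ μ.real E / 2) :
    t / 2 ≤ ((μ.real E)⁻¹ * ∫ x in E, g x ^ p ∂μ) ^ (1 / p) := by
  have hp0 : 0 < p := zero_lt_one.trans_le hp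
  have hlarge : μ.real E / 2 ≤ (μ.restrict E).real {x | t ^ p ≤ g x ^ p} := by
    have hcover : E ⊆ ({x | t ^ p ≤ g x ^ p} ∩ E) ∪ {x ∈ E | g x ≤ t} := fun x hx =>
      (le_or_gt (g x) t).elim (fun h => .inr ⟨hx, h⟩)
        fun h => .inl ⟨Real.rpow_le_rpow ht h.le hp0.le, hx⟩
    have hsplit : μ.real E ≤ μ.real ({x | t ^ p ≤ g x ^ p} ∩ E) + μ.real {x ∈ E | g x ≤ t} :=
      (measureReal_mono hcover (measure_ne_top_of_subset
        (union_subset inter_subset_right (sep_subset _ _)) hE)).trans (measureReal_union_le _ _)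
    have : IsFiniteMeasure (μ.restrict E) := isFiniteMeasure_restrict.2 hE
    have hrestrict : μ.real ({x | t ^ p ≤ g x ^ p} ∩ E)
        ≤ (μ.restrict E).real {x | t ^ p ≤ g x ^ p} :=
      ENNReal.toReal_mono (measure_ne_top _ _) (Measure.le_restrict_apply _ _)
    linarith
  have hmarkov := mul_meas_ge_le_integral_of_nonneg
    (ae_of_all _ fun x => Real.rpow_nonneg (hg x) p) hgp (t ^ p)
  have hvE : 0 < μ.real E := ENNReal.toReal_pos hE0 hE
  have hbase : t ^ p / 2 ≤ (μ.real E)⁻¹ * ∫ x in E, g x ^ p ∂μ := by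
    rw [le_inv_mul_iff₀ hvE]
    nlinarith [Real.rpow_nonneg ht p]
  have htwo : (2 : ℝ) ^ (1 / p) ≤ 2 := by
    simpa using Real.rpow_le_rpow_of_exponent_le one_le_two ((div_le_one hp0).2 hp)
  calc t / 2 ≤ t / 2 ^ (1 / p) := div_le_div_of_nonneg_left ht (by positivity) htwo
    _ = (t ^ p / 2) ^ (1 / p) := by
      rw [Real.div_rpow (by positivity) zero_le_two, one_div, Real.rpow_rpow_inv ht hp0.ne']
    _ ≤ _ := Real.rpow_le_rpow (by positivity) hbase (by positivity)

theorem exists_mem_closedBall_biSup_norm_le {X G : Type*} [PseudoMetricSpace X] [ProperSpace X]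
    [SeminormedAddCommGroup G] {g : X → G} (hg : Continuous g) (c : X) {R : ℝ} (hR : 0 ≤ R) :
    ∃ y ∈ closedBall c R, ⨆ x ∈ ball c R, ‖g x‖ ≤ ‖g y‖ := by
  obtain ⟨y, hy, hmax⟩ := (isCompact_closedBall c R).exists_isMaxOn (nonempty_closedBall.2 hR)
    hg.norm.continuousOn
  exact ⟨y, hy, Real.iSup_le (fun x => Real.iSup_le
    (fun hx => hmax (ball_subset_closedBall hx)) (norm_nonneg _)) (norm_nonneg _)⟩

variable {F : Type*} [NormedAddCommGroup F] [InnerProductSpace ℝ F] [FiniteDimensional ℝ F]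

theorem AffineMap.exists_eq_add_inner (f : F →ᵃ[ℝ] ℝ) (c : F) :
    ∃ w : F, ∀ x, f x = f c + ⟪w, x - c⟫ := by
  refine ⟨(InnerProductSpace.toDual ℝ F).symm (LinearMap.toContinuousLinearMap f.linear), fun x => ?_⟩
  rw [InnerProductSpace.toDual_symm_apply, LinearMap.coe_toContinuousLinearMap', ← vsub_eq_sub,
    f.linearMap_vsub, vsub_eq_sub]
  ring

variable [MeasurableSpace F] [BorelSpace F]

theorem volume_slab_inter_closedBall_le {u : F} (hu : ‖u‖ = 1) (c : F) (s : ℝ) {δ R : ℝ}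
    (hδ : 0 ≤ δ) (hR : 0 < R) :
    volume ({x | |⟪u, x - c⟫ - s| ≤ δ} ∩ closedBall c R)
      ≤ ENNReal.ofReal (δ / R * (2 * R) ^ finrank ℝ F) := by
  have : Nontrivial F := nontrivial_of_ne u 0 (norm_ne_zero_iff.1 (by simp [hu]))
  obtain ⟨k, hk⟩ : ∃ k, finrank ℝ F = k + 1 := Nat.exists_eq_add_one.2 finrank_pos
  have hu' : Orthonormal ℝ (({0} : Set (Fin (k + 1))).domRestrict fun _ => u) :=
    ⟨fun _ => hu, fun i j hij => absurd (Subtype.ext (i.2.trans j.2.symm)) hij⟩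
  obtain ⟨b, hb⟩ := hu'.exists_orthonormalBasis_extension_of_card_eq (by simp [hk])
  -- in coordinates `b` starting with `u`, the set lies in a box of sides `2δ, 2R, …, 2R`
  let box : Fin (k + 1) → Set ℝ := Fin.cons (Icc (s - δ) (s + δ)) fun _ => Icc (-R) R
  let φ : F → Fin (k + 1) → ℝ := fun x => (b.repr (x - c)).ofLp
  have hφ : MeasurePreserving φ volume volume :=
    (EuclideanSpace.volume_preserving_symm_measurableEquiv_toLp _).comp
      (b.measurePreserving_repr.comp (measurePreserving_sub_right volume c))
  have hsub : {x | |⟪u, x - c⟫ - s| ≤ δ} ∩ closedBall c R ⊆ φ ⁻¹' univ.pi box := by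
    rintro x ⟨hslab : |⟪u, x - c⟫ - s| ≤ δ, hball⟩ i -
    refine Fin.cases ?_ (fun j => ?_) i
    · simp only [φ, box, Fin.cons_zero, b.repr_apply_apply, hb 0 rfl, mem_Icc]
      constructor <;> linarith [abs_le.1 hslab]
    · simp only [φ, box, Fin.cons_succ, mem_Icc, ← abs_le]
      calc |(b.repr (x - c)).ofLp j.succ| ≤ ‖b.repr (x - c)‖ :=
          (Real.norm_eq_abs _).symm.trans_le (PiLp.norm_apply_le _ _)
        _ = ‖x - c‖ := b.repr.norm_map _
        _ ≤ R := mem_closedBall_iff_norm.1 hball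
  calc volume ({x | |⟪u, x - c⟫ - s| ≤ δ} ∩ closedBall c R)
      ≤ volume (φ ⁻¹' univ.pi box) := measure_mono hsub
    _ = ∏ i, volume (box i) := by
      rw [hφ.measure_preimage (MeasurableSet.univ_pi fun i => ?_).nullMeasurableSet, volume_pi_pi]
      exact Fin.cases measurableSet_Icc (fun _ => measurableSet_Icc) i
    _ = ENNReal.ofReal (δ / R * (2 * R) ^ finrank ℝ F) := by
      simp only [Fin.prod_univ_succ, box, Fin.cons_zero, Fin.cons_succ, Real.volume_Icc,
        Finset.prod_const, Finset.card_univ, Fintype.card_fin, hk]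
      rw [← ENNReal.ofReal_pow (by linarith), ← ENNReal.ofReal_mul (by linarith)]
      congr 1
      field_simp
      ring

theorem volume_sublevel_abs_affineMap_le (f : F →ᵃ[ℝ] ℝ) {c y : F} {R t : ℝ}
    (hR : 0 < R) (hy : y ∈ closedBall c R) (ht : 0 ≤ t) (hty : 2 * t < |f y|) :
    volume {x ∈ closedBall c R | |f x| ≤ t}
      ≤ ENNReal.ofReal (4 * t / |f y| * (2 * R) ^ finrank ℝ F) := by
  obtain ⟨w, hf⟩ := f.exists_eq_add_inner c
  have hw : ∀ x ∈ closedBall c R, |⟪w, x - c⟫| ≤ ‖w‖ * R := fun x hx =>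
    (abs_real_inner_le_norm _ _).trans
      (mul_le_mul_of_nonneg_left (mem_closedBall_iff_norm.1 hx) (norm_nonneg w))
  have hfy : |f y| ≤ |f c| + ‖w‖ * R := hf y ▸ (abs_add_le _ _).trans (by linarith [hw y hy])
  rcases le_or_gt (4 * (‖w‖ * R)) |f y| with hsmall | hlarge
  · -- `|f|` stays above `|f y| / 2 > t` on the whole ball
    suffices {x ∈ closedBall c R | |f x| ≤ t} = ∅ by rw [this, measure_empty]; exact zero_le
    refine eq_empty_of_forall_notMem fun x ⟨hx, hfx⟩ => ?_
    have : |f c| - ‖w‖ * R ≤ |f x| :=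
      hf x ▸ (abs_sub_abs_le_abs_add _ _).trans' (by linarith [hw x hx])
    linarith
  have hw0 : 0 < ‖w‖ := pos_of_mul_pos_left (by linarith [abs_nonneg (f y)]) hR.le
  -- otherwise the sublevel set lies in a slab of width `2 t / ‖w‖` orthogonal to `w`
  let u := ‖w‖⁻¹ • w
  have hu : ‖u‖ = 1 := norm_smul_inv_norm (norm_pos_iff.1 hw0)
  calc volume {x ∈ closedBall c R | |f x| ≤ t}
      ≤ volume ({x | |⟪u, x - c⟫ - -(f c / ‖w‖)| ≤ t / ‖w‖} ∩ closedBall c R) := by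
        refine measure_mono fun x ⟨hx, hfx⟩ => ⟨?_, hx⟩
        have : ⟪u, x - c⟫ - -(f c / ‖w‖) = f x / ‖w‖ := by
          rw [real_inner_smul_left, hf x]; field_simp; ring
        rw [mem_ofPred_eq, this, abs_div, abs_norm]
        exact div_le_div_of_nonneg_right hfx hw0.le
    _ ≤ ENNReal.ofReal (t / ‖w‖ / R * (2 * R) ^ finrank ℝ F) :=
        volume_slab_inter_closedBall_le hu c _ (by positivity) hR
    _ ≤ ENNReal.ofReal (4 * t / |f y| * (2 * R) ^ finrank ℝ F) := by
        refine ENNReal.ofReal_le_ofReal (mul_le_mul_of_nonneg_right ?_ (by positivity))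
        rw [div_div, show 4 * t / |f y| = t / (|f y| / 4) by field_simp]
        exact div_le_div_of_nonneg_left ht (by linarith) (by linarith)

variable (F) in
noncomputable def affineRemezConst : ℝ :=
  4 * 2 ^ finrank ℝ F / volume.real (ball (0 : F) 1)

theorem measureReal_sublevel_norm_affineMap_le {G : Type*} [NormedAddCommGroup G]
    [InnerProductSpace ℝ G] (a : F →ᵃ[ℝ] G) {c y : F} {R t : ℝ} (hR : 0 < R)
    (hy : y ∈ closedBall c R) (ht : 0 ≤ t) (hty : 2 * t < ‖a y‖) :
    volume.real {x ∈ closedBall c R | ‖a x‖ ≤ t}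
      ≤ affineRemezConst F * (t / ‖a y‖) * volume.real (ball c R) := by
  have hay : ‖a y‖ ≠ 0 := by linarith
  set u := ‖a y‖⁻¹ • a y
  have hu : ‖u‖ = 1 := norm_smul_inv_norm (norm_ne_zero_iff.1 hay)
  let f : F →ᵃ[ℝ] ℝ := (innerₛₗ ℝ u).toAffineMap.comp a
  have hf : ∀ x, f x = ⟪u, a x⟫ := fun _ => rfl
  have hfx : ∀ x, |f x| ≤ ‖a x‖ := fun x => by
    simpa [hf, hu] using abs_real_inner_le_norm u (a x)
  have hfy : |f y| = ‖a y‖ := by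
    rw [hf, real_inner_smul_left, real_inner_self_eq_norm_sq, pow_two, inv_mul_cancel_left₀ hay,
      abs_norm]
  have hball : volume.real (ball c R) = R ^ finrank ℝ F * volume.real (ball (0 : F) 1) := by
    rw [measureReal_def, Measure.addHaar_ball_of_pos _ _ hR, ENNReal.toReal_mul,
      ENNReal.toReal_ofReal (by positivity), measureReal_def]
  have hω : 0 < volume.real (ball (0 : F) 1) :=
    ENNReal.toReal_pos (measure_ball_pos _ _ one_pos).ne' measure_ball_lt_top.ne
  calc volume.real {x ∈ closedBall c R | ‖a x‖ ≤ t}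
      ≤ volume.real {x ∈ closedBall c R | |f x| ≤ t} :=
        measureReal_mono (fun x ⟨hx, hax⟩ => ⟨hx, (hfx x).trans hax⟩)
          (measure_ne_top_of_subset (sep_subset _ _) measure_closedBall_lt_top.ne)
    _ ≤ 4 * t / ‖a y‖ * (2 * R) ^ finrank ℝ F := ENNReal.toReal_le_of_le_ofReal (by positivity)
        (hfy ▸ volume_sublevel_abs_affineMap_le f hR hy ht (hfy ▸ hty))
    _ = affineRemezConst F * (t / ‖a y‖) * volume.real (ball c R) := by
        rw [affineRemezConst, hball, mul_pow]
        field_simp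

theorem measureReal_sublevel_norm_affineMap_le_half {G : Type*} [NormedAddCommGroup G]
    [InnerProductSpace ℝ G] (a : F →ᵃ[ℝ] G) {c y : F} {R : ℝ} {E : Set F} (hR : 0 < R)
    (hy : y ∈ closedBall c R) (hay : 0 < ‖a y‖) (hEB : E ⊆ ball c R) :
    volume.real {x ∈ E | ‖a x‖ ≤
        volume.real E / volume.real (ball c R) / (2 + 2 * affineRemezConst F) * ‖a y‖}
      ≤ volume.real E / 2 := by
  set κ := affineRemezConst F
  have hκ : 0 < κ := div_pos (by positivity)
    (ENNReal.toReal_pos (measure_ball_pos _ _ one_pos).ne' measure_ball_lt_top.ne)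
  have hB : 0 < volume.real (ball c R) :=
    ENNReal.toReal_pos (measure_ball_pos _ _ hR).ne' measure_ball_lt_top.ne
  set ρ := volume.real E / volume.real (ball c R)
  have hρ : ρ ≤ 1 := div_le_one_of_le₀ (measureReal_mono hEB) measureReal_nonneg
  calc _ ≤ volume.real {x ∈ closedBall c R | ‖a x‖ ≤ ρ / (2 + 2 * κ) * ‖a y‖} :=
        measureReal_mono (fun x hx => ⟨ball_subset_closedBall (hEB hx.1), hx.2⟩)
          (measure_ne_top_of_subset (sep_subset _ _) measure_closedBall_lt_top.ne)
    _ ≤ κ * (ρ / (2 + 2 * κ) * ‖a y‖ / ‖a y‖) * volume.real (ball c R) := by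
        refine measureReal_sublevel_norm_affineMap_le a hR hy (by positivity) ?_
        have : ρ / (2 + 2 * κ) < 1 / 2 := by rw [div_lt_div_iff₀ (by positivity) two_pos]; linarith
        nlinarith
    _ = κ / (2 + 2 * κ) * volume.real E := by
        simp only [ρ]; field_simp
    _ ≤ volume.real E / 2 := by
        rw [div_mul_eq_mul_div, div_le_div_iff₀ (by positivity) two_pos]
        nlinarith [measureReal_nonneg (μ := volume) (s := E)]

theorem statement0 (n m : ℕ) (p : ℝ) (hp : 1 ≤ p) :
    ∃ C : ℝ, 1 ≤ C ∧
      ∀ (a : EuclideanSpace ℝ (Fin n) →ᵃ[ℝ] EuclideanSpace ℝ (Fin m))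
        (x₀ : EuclideanSpace ℝ (Fin n)) (R : ℝ), 0 < R →
        ∀ E : Set (EuclideanSpace ℝ (Fin n)), MeasurableSet E → E ⊆ ball x₀ R →
          0 < volume E →
          C⁻¹ * (⨆ x ∈ ball x₀ R, ‖a x‖) * ((volume E).toReal / (volume (ball x₀ R)).toReal)
            ≤ ((volume E).toReal⁻¹ * ∫ x in E, ‖a x‖ ^ p) ^ (1 / p) := by
  set κ := affineRemezConst (EuclideanSpace ℝ (Fin n))
  have hκ : 0 ≤ κ := div_nonneg (by positivity) measureReal_nonneg
  refine ⟨2 * (2 + 2 * κ), by linarith, fun a x₀ R hR E _ hEB hE0 => ?_⟩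
  have hEfin : volume E ≠ ∞ := measure_ne_top_of_subset hEB measure_ball_lt_top.ne
  have hint : IntegrableOn (fun x => ‖a x‖ ^ p) E :=
    ((a.continuous_of_finiteDimensional.norm.rpow_const fun _ => .inr (by linarith)).continuousOn
      |>.integrableOn_compact (isCompact_closedBall x₀ R)).mono_set
        (hEB.trans ball_subset_closedBall)
  obtain ⟨y, hy, hsup⟩ :=
    exists_mem_closedBall_biSup_norm_le a.continuous_of_finiteDimensional x₀ hR.le
  have hρ : 0 ≤ (volume E).toReal / (volume (ball x₀ R)).toReal := by positivity
  rcases (norm_nonneg (a y)).eq_or_lt with hzero | hpos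
  · refine le_trans ?_ (Real.rpow_nonneg (mul_nonneg (by positivity)
      (integral_nonneg fun _ => by positivity)) _)
    exact mul_nonpos_of_nonpos_of_nonneg (mul_nonpos_of_nonneg_of_nonpos
      (by positivity) (hsup.trans hzero.ge)) hρ
  calc _ ≤ (2 * (2 + 2 * κ))⁻¹ * ‖a y‖ * ((volume E).toReal / (volume (ball x₀ R)).toReal) :=
        mul_le_mul_of_nonneg_right (mul_le_mul_of_nonneg_left hsup (by positivity)) hρ
    _ = (volume E).toReal / (volume (ball x₀ R)).toReal / (2 + 2 * κ) * ‖a y‖ / 2 := by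
        rw [mul_inv]; ring
    _ ≤ _ := div_two_le_rpow_average_of_measureReal_sublevel_le_half hp (by positivity)
        (fun _ => norm_nonneg _) hint hEfin hE0.ne'
        (measureReal_sublevel_norm_affineMap_le_half a hR hy hpos hEB)
end

section
/- Let $a : \mathbb{R}^n \to \mathbb{R}$ be an affine map $a(x) = c + v \cdot x$ with $(c,v) \neq 0$, and let $B = B(0,1) \subset \mathbb{R}^n$ be the unit ball. Then there is a universal constant $C_0 \geq 1$ (depending only on $n$) such that for all $t > 0$, $|\{x \in B : |a(x)| \leq t\}| \leq \frac{C_0 t}{|c| + |v|}$. -/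
/-!
An orthonormal basis containing `v / ‖v‖` puts the set
`{x ∈ B : |c + ⟪v, x⟫| ≤ t}` inside a box with one side of length `2t / ‖v‖` and the other sides
of length `2`, so its volume is at most `2ⁿ t / ‖v‖`. The set is empty unless `|c| ≤ t + ‖v‖`;
hence `|c| + ‖v‖ ≤ 3‖v‖` when `t < ‖v‖`, while for `t ≥ ‖v‖` we have `|c| + ‖v‖ ≤ 3t` and the
trivial bound `|B| ≤ 2ⁿ` suffices. Either way `C₀ = 3 · 2ⁿ` works.
-/

open MeasureTheory Metric Set
open scoped ENNReal RealInnerProductSpace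

section

variable {ι E : Type*} [Fintype ι] [NormedAddCommGroup E] [InnerProductSpace ℝ E]

lemma OrthonormalBasis.abs_repr_apply_le_norm (b : OrthonormalBasis ι ℝ E) (x : E) (i : ι) :
    |b.repr x i| ≤ ‖x‖ := by
  simpa [b.repr_apply_apply, b.norm_eq_one] using abs_real_inner_le_norm (b i) x

lemma abs_le_of_abs_add_inner_le {c t : ℝ} {v x : E} (hx : x ∈ ball (0 : E) 1)
    (hxt : |c + ⟪v, x⟫| ≤ t) : |c| ≤ t + ‖v‖ := by
  have : |⟪v, x⟫| ≤ ‖v‖ := (abs_real_inner_le_norm v x).trans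
    (mul_le_of_le_one_right (norm_nonneg v) (mem_ball_zero_iff.mp hx).le)
  calc |c| = |(c + ⟪v, x⟫) - ⟪v, x⟫| := by rw [add_sub_cancel_right]
    _ ≤ |c + ⟪v, x⟫| + |⟪v, x⟫| := abs_sub _ _
    _ ≤ t + ‖v‖ := add_le_add hxt this

variable [FiniteDimensional ℝ E]

lemma exists_orthonormalBasis_apply_eq {u : E} (hu : ‖u‖ = 1) :
    ∃ (b : OrthonormalBasis (Fin (Module.finrank ℝ E)) ℝ E) (k : Fin (Module.finrank ℝ E)),
      b k = u := by
  have : Nontrivial E := nontrivial_of_ne u 0 (norm_ne_zero_iff.mp (by simp [hu]))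
  let k : Fin (Module.finrank ℝ E) := ⟨0, Module.finrank_pos⟩
  have hon : Orthonormal ℝ (({k} : Set _).domRestrict fun _ => u) :=
    orthonormal_subsingleton_iff.mpr fun _ => hu
  obtain ⟨b, hb⟩ := hon.exists_orthonormalBasis_extension_of_card_eq (by simp)
  exact ⟨b, k, hb k rfl⟩

variable [MeasurableSpace E] [BorelSpace E]

lemma OrthonormalBasis.volume_le_prod_of_forall_repr_mem (b : OrthonormalBasis ι ℝ E)
    {s : Set E} {g : ι → Set ℝ} (hs : ∀ x ∈ s, ∀ i, b.repr x i ∈ g i) :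
    volume s ≤ ∏ i, volume (g i) := by
  have hψ := (EuclideanSpace.volume_preserving_symm_measurableEquiv_toLp ι).comp
    b.measurePreserving_measurableEquiv
  calc volume s
      ≤ volume (b.measurableEquiv.trans (MeasurableEquiv.toLp 2 (ι → ℝ)).symm ⁻¹' pi univ g) :=
        measure_mono fun x hx => mem_univ_pi.mpr (hs x hx)
    _ = ∏ i, volume (g i) := by
        rw [hψ.measure_preimage_equiv, volume_pi_pi]

lemma OrthonormalBasis.volume_ball_inter_inner_mem_Icc_le [DecidableEq ι]
    (b : OrthonormalBasis ι ℝ E) (k : ι) (a a' : ℝ) :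
    volume {x ∈ ball (0 : E) 1 | ⟪b k, x⟫ ∈ Icc a a'} ≤
      ENNReal.ofReal ((a' - a) * 2 ^ (Fintype.card ι - 1)) := by
  refine (b.volume_le_prod_of_forall_repr_mem
    (g := Function.update (fun _ => Icc (-1) 1) k (Icc a a')) ?_).trans_eq ?_
  · rintro x ⟨hx, hxk⟩ i
    rcases eq_or_ne i k with rfl | hik
    · simpa [b.repr_apply_apply] using hxk
    · simpa [hik, ← abs_le] using
        (b.abs_repr_apply_le_norm x i).trans (mem_ball_zero_iff.mp hx).le
  · rw [Finset.prod_congr rfl fun i _ => Function.apply_update (fun _ => volume) _ k _ i,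
      Finset.prod_update_of_mem (Finset.mem_univ k)]
    simp only [Real.volume_Icc, Finset.prod_const, Finset.card_univ_sdiff, Finset.card_singleton]
    rw [ENNReal.ofReal_mul' (by positivity), ENNReal.ofReal_pow (by norm_num)]
    norm_num

lemma volume_ball_zero_one_le :
    volume (ball (0 : E) 1) ≤ ENNReal.ofReal (2 ^ Module.finrank ℝ E) := by
  let b := stdOrthonormalBasis ℝ E
  refine (b.volume_le_prod_of_forall_repr_mem (g := fun _ => Icc (-1) 1)
    fun x hx i => ?_).trans_eq ?_
  · exact abs_le.mp ((b.abs_repr_apply_le_norm x i).trans (mem_ball_zero_iff.mp hx).le)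
  · simp only [Real.volume_Icc, Finset.prod_const, Finset.card_univ, Fintype.card_fin]
    rw [ENNReal.ofReal_pow (by norm_num)]
    norm_num

lemma volume_ball_inter_abs_add_inner_le_le {v : E} (hv : v ≠ 0) (c t : ℝ) :
    volume {x ∈ ball (0 : E) 1 | |c + ⟪v, x⟫| ≤ t} ≤
      ENNReal.ofReal (2 ^ Module.finrank ℝ E * t / ‖v‖) := by
  have hv' : 0 < ‖v‖ := norm_pos_iff.mpr hv
  obtain ⟨b, k, hbk⟩ := exists_orthonormalBasis_apply_eq (norm_smul_inv_norm (𝕜 := ℝ) hv)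
  have hinner (x : E) : ⟪v, x⟫ = ‖v‖ * ⟪b k, x⟫ := by
    rw [hbk, real_inner_smul_left, RCLike.ofReal_real_eq_id, id, mul_inv_cancel_left₀ hv'.ne']
  have hsub : {x ∈ ball (0 : E) 1 | |c + ⟪v, x⟫| ≤ t} ⊆
      {x ∈ ball (0 : E) 1 | ⟪b k, x⟫ ∈ Icc ((-c - t) / ‖v‖) ((-c + t) / ‖v‖)} := by
    rintro x ⟨hx, hxt⟩
    refine ⟨hx, ?_⟩
    rw [hinner, abs_le] at hxt
    rw [mem_Icc, div_le_iff₀ hv', le_div_iff₀ hv']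
    constructor <;> linarith
  refine (measure_mono hsub).trans ((b.volume_ball_inter_inner_mem_Icc_le k _ _).trans_eq ?_)
  rw [Fintype.card_fin, ← mul_pow_sub_one k.pos.ne' (2 : ℝ)]
  congr 1
  ring

end

theorem statement1 (n : ℕ) :
    ∃ C₀ : ℝ, 1 ≤ C₀ ∧
      ∀ (c : ℝ) (v : EuclideanSpace ℝ (Fin n)), (c, v) ≠ 0 →
        ∀ t : ℝ, 0 < t →
          volume {x ∈ ball (0 : EuclideanSpace ℝ (Fin n)) 1 | abs (c + ⟪v, x⟫) ≤ t}
            ≤ ENNReal.ofReal (C₀ * t / (|c| + ‖v‖)) := by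
  refine ⟨3 * 2 ^ n, by linarith [one_le_pow₀ (M₀ := ℝ) (n := n) one_le_two], ?_⟩
  intro c v hcv t ht
  set S := {x ∈ ball (0 : EuclideanSpace ℝ (Fin n)) 1 | |c + ⟪v, x⟫| ≤ t}
  obtain hS | ⟨x₀, hx₀, hx₀t⟩ := S.eq_empty_or_nonempty
  · simp [hS]
  have hc : |c| ≤ t + ‖v‖ := abs_le_of_abs_add_inner_le hx₀ hx₀t
  have hD : 0 < |c| + ‖v‖ := by
    rcases eq_or_ne v 0 with rfl | hv
    · simpa [Prod.ext_iff] using hcv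
    · positivity
  have h2n : (0 : ℝ) < 2 ^ n := by positivity
  rcases le_or_gt ‖v‖ t with hvt | htv
  · calc volume S ≤ volume (ball (0 : EuclideanSpace ℝ (Fin n)) 1) :=
          measure_mono (sep_subset _ _)
      _ ≤ ENNReal.ofReal (2 ^ n) :=
        volume_ball_zero_one_le.trans_eq (by rw [finrank_euclideanSpace_fin])
      _ ≤ _ := by
        refine ENNReal.ofReal_le_ofReal ?_
        rw [le_div_iff₀ hD]
        nlinarith
  · have hv : 0 < ‖v‖ := ht.trans htv
    calc volume S ≤ ENNReal.ofReal (2 ^ n * t / ‖v‖) :=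
          (volume_ball_inter_abs_add_inner_le_le (norm_pos_iff.mp hv) c t).trans_eq
            (by rw [finrank_euclideanSpace_fin])
      _ ≤ _ := by
        refine ENNReal.ofReal_le_ofReal ?_
        rw [div_le_div_iff₀ hv hD]
        have := mul_le_mul_of_nonneg_left (show |c| + ‖v‖ ≤ 3 * ‖v‖ by linarith)
          (mul_pos h2n ht).le
        linarith
end

section
/- Let $(e_1, \ldots, e_N)$ be the canonical basis of $\mathbb{R}^N$ and set $e_{N+k} = -e_k$ for $k = 1, \ldots, N$. Fix $x_0 \in \mathbb{R}^N$ and $r_0 > 0$, and let $r_1 = r_0/(2N)$. Then for every family of points $x_1, \ldots, x_{2N} \in \mathbb{R}^N$ with $x_k \in B(x_0 + r_0 e_k, r_1)$ for each $k$, and for all $x, y \in \mathbb{R}^N$, one has $\sup_{1 \leq k \leq 2N} |y \cdot (x - x_k)| \geq \frac{r_0}{2N} |y|$. -/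
open Metric Set
open scoped RealInnerProductSpace

theorem statement2 (N : ℕ) (hN : 0 < N) (x₀ : EuclideanSpace ℝ (Fin N)) (r₀ : ℝ) (hr₀ : 0 < r₀)
    (e : Fin (2 * N) → EuclideanSpace ℝ (Fin N))
    (he : ∀ k : Fin (2 * N), e k =
      if h : (k : ℕ) < N then EuclideanSpace.single ⟨(k : ℕ), h⟩ 1
      else -EuclideanSpace.single ⟨(k : ℕ) - N, by have := k.isLt; omega⟩ 1)
    (x_ : Fin (2 * N) → EuclideanSpace ℝ (Fin N))
    (hx : ∀ k, x_ k ∈ ball (x₀ + r₀ • e k) (r₀ / (2 * N))) :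
    ∀ x y : EuclideanSpace ℝ (Fin N), ∃ k : Fin (2 * N),
      r₀ / (2 * N) * ‖y‖ ≤ |⟪y, x - x_ k⟫| := by
  intro x y
  have hN2 : (0:ℕ) < 2 * N := by omega
  by_cases hy : y = 0
  · exact ⟨⟨0, hN2⟩, by simp [hy]⟩
  obtain ⟨i, -, hi⟩ := Finset.exists_max_image (Finset.univ : Finset (Fin N))
    (fun j => |y j|) ⟨⟨0, hN⟩, Finset.mem_univ _⟩
  have hNpos : (0:ℝ) < (N:ℝ) := by exact_mod_cast hN
  have hnorm : ‖y‖ ≤ N * |y i| := by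
    have h1 : ‖y‖ ^ 2 ≤ (N * |y i|) ^ 2 := by
      rw [EuclideanSpace.norm_eq y, Real.sq_sqrt (by positivity)]
      calc ∑ j, ‖y j‖ ^ 2 ≤ ∑ _j : Fin N, |y i| ^ 2 := by
            apply Finset.sum_le_sum
            intro j _
            have := hi j (Finset.mem_univ j)
            simpa [Real.norm_eq_abs] using pow_le_pow_left₀ (abs_nonneg _) this 2
        _ = N * |y i| ^ 2 := by simp [Finset.sum_const, mul_comm]
        _ ≤ (N * |y i|) ^ 2 := by
            rw [mul_pow]
            have h2 : (1:ℝ) ≤ (N:ℝ) := by exact_mod_cast hN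
            nlinarith [sq_nonneg (y i), sq_abs (y i), mul_nonneg
              (show (0:ℝ) ≤ (N:ℝ)^2 - N by nlinarith) (sq_nonneg |y i|)]
    exact (pow_le_pow_iff_left₀ (norm_nonneg _) (by positivity) two_ne_zero).mp h1
  -- the two opposite indices
  set k : Fin (2 * N) := ⟨(i : ℕ), by omega⟩ with hk
  set k' : Fin (2 * N) := ⟨(i : ℕ) + N, by have := i.isLt; omega⟩ with hk'
  have hek : e k = EuclideanSpace.single i 1 := by
    rw [he k]
    simp only [hk, i.isLt, dif_pos]
  have hek' : e k' = -EuclideanSpace.single i 1 := by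
    rw [he k']
    have hkn : ¬ ((k' : ℕ) < N) := by
      show ¬ ((i : ℕ) + N < N); omega
    have harg : ((k' : ℕ) - N) = (i : ℕ) := Nat.add_sub_cancel _ _
    rw [dif_neg hkn, neg_inj]
    ext j
    simp [EuclideanSpace.single_apply, Fin.ext_iff, harg]
  -- error terms
  set t := r₀ / (2 * N) with ht
  have ht0 : 0 < t := by positivity
  have hip : ∀ j : Fin (2 * N), |⟪y, x_ j - (x₀ + r₀ • e j)⟫| ≤ t * ‖y‖ := by
    intro j
    have hj := hx j
    rw [mem_ball, dist_eq_norm] at hj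
    calc |⟪y, x_ j - (x₀ + r₀ • e j)⟫| ≤ ‖y‖ * ‖x_ j - (x₀ + r₀ • e j)‖ :=
          abs_real_inner_le_norm _ _
      _ ≤ ‖y‖ * t := mul_le_mul_of_nonneg_left hj.le (norm_nonneg _)
      _ = t * ‖y‖ := mul_comm _ _
  have hsingle : ⟪y, (EuclideanSpace.single i (1:ℝ))⟫ = y i := by
    rw [EuclideanSpace.inner_single_right]; simp
  have hdiff : ⟪y, x - x_ k⟫ - ⟪y, x - x_ k'⟫ =
      -(2 * r₀ * y i) - (⟪y, x_ k - (x₀ + r₀ • e k)⟫ - ⟪y, x_ k' - (x₀ + r₀ • e k')⟫) := by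
    have expand : ∀ j : Fin (2 * N), ⟪y, x - x_ j⟫ =
        ⟪y, x - x₀⟫ - r₀ * ⟪y, e j⟫ - ⟪y, x_ j - (x₀ + r₀ • e j)⟫ := by
      intro j
      have hr : x - x_ j = (x - x₀) - r₀ • e j - (x_ j - (x₀ + r₀ • e j)) := by abel
      rw [hr, inner_sub_right, inner_sub_right, real_inner_smul_right]
    rw [expand k, expand k', hek, hek', inner_neg_right, hsingle]
    ring
  have h4 : 2 * (t * ‖y‖) ≤ r₀ * |y i| := by
    have key : 2 * (t * ‖y‖) = r₀ * ‖y‖ / N := by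
      rw [ht]; field_simp
    rw [key, div_le_iff₀ hNpos]
    calc r₀ * ‖y‖ ≤ r₀ * (N * |y i|) := mul_le_mul_of_nonneg_left hnorm hr₀.le
      _ = r₀ * |y i| * N := by ring
  have habs : 2 * (t * ‖y‖) ≤ |⟪y, x - x_ k⟫ - ⟪y, x - x_ k'⟫| := by
    rw [hdiff]
    have h1 := hip k
    have h2 := hip k'
    have hD : |⟪y, x_ k - (x₀ + r₀ • e k)⟫ - ⟪y, x_ k' - (x₀ + r₀ • e k')⟫| ≤
        2 * (t * ‖y‖) := (abs_sub _ _).trans (by linarith)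
    have h3 : |(-(2 * r₀ * y i))| = 2 * r₀ * |y i| := by
      rw [abs_neg, abs_mul, abs_of_pos (show (0:ℝ) < 2 * r₀ by linarith)]
    calc 2 * (t * ‖y‖) ≤ 2 * r₀ * |y i| - 2 * (t * ‖y‖) := by linarith
      _ ≤ |(-(2 * r₀ * y i))| -
          |⟪y, x_ k - (x₀ + r₀ • e k)⟫ - ⟪y, x_ k' - (x₀ + r₀ • e k')⟫| := by
          rw [h3]; linarith
      _ ≤ _ := abs_sub_abs_le_abs_sub _ _
  by_cases hA : t * ‖y‖ ≤ |⟪y, x - x_ k⟫|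
  · exact ⟨k, hA⟩
  · refine ⟨k', ?_⟩
    push_neg at hA
    have h6 : |⟪y, x - x_ k⟫ - ⟪y, x - x_ k'⟫| ≤ |⟪y, x - x_ k⟫| + |⟪y, x - x_ k'⟫| :=
      abs_sub _ _
    linarith
end

section
/- Let $(e_1, \ldots, e_N)$ be the canonical basis of $\mathbb{R}^N$, let $x_0 \in \mathbb{R}^N$, $r_0 > 0$. Then for all $x, y \in \mathbb{R}^N$, $\sup_{1 \leq k \leq N} \max\big(|y \cdot (x - x_0 - r_0 e_k)|, |y \cdot (x - x_0 + r_0 e_k)|\big) \geq \frac{r_0}{N} |y|$. -/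
open Metric Set
open scoped RealInnerProductSpace

theorem statement3 (N : ℕ) (hN : 0 < N) (x₀ : EuclideanSpace ℝ (Fin N)) (r₀ : ℝ)
    (hr₀ : 0 < r₀) :
    ∀ x y : EuclideanSpace ℝ (Fin N), ∃ k : Fin N,
      r₀ / N * ‖y‖ ≤
        max |⟪y, x - x₀ - r₀ • EuclideanSpace.single k 1⟫|
            |⟪y, x - x₀ + r₀ • EuclideanSpace.single k 1⟫| := by
  intro x y
  obtain ⟨k, hk⟩ : ∃ k : Fin N, ∀ i, |y i| ≤ |y k| := by
    obtain ⟨k, -, hk⟩ := Finset.exists_max_image Finset.univ (fun i => |y i|)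
      ⟨⟨0, hN⟩, Finset.mem_univ _⟩
    exact ⟨k, fun i => hk i (Finset.mem_univ _)⟩
  refine ⟨k, ?_⟩
  have hNpos : (0 : ℝ) < N := Nat.cast_pos.mpr hN
  have hnorm : ‖y‖ ≤ N * |y k| := by
    have h1 : ∑ i, ‖y i‖ ^ 2 ≤ (N : ℝ) * |y k| ^ 2 := by
      calc ∑ i, ‖y i‖ ^ 2 ≤ ∑ _i : Fin N, |y k| ^ 2 := by
            refine Finset.sum_le_sum fun i _ => ?_
            rw [Real.norm_eq_abs]
            exact pow_le_pow_left₀ (abs_nonneg _) (hk i) 2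
        _ = (N : ℝ) * |y k| ^ 2 := by simp [mul_comm]
    have h2 : (N : ℝ) * |y k| ^ 2 ≤ (N * |y k|) ^ 2 := by
      rw [mul_pow]
      have hN1 : (1 : ℝ) ≤ N := Nat.one_le_cast.mpr hN
      have : (N : ℝ) ≤ (N : ℝ) ^ 2 := by nlinarith
      nlinarith [sq_nonneg (|y k|)]
    calc ‖y‖ = Real.sqrt (∑ i, ‖y i‖ ^ 2) := EuclideanSpace.norm_eq y
      _ ≤ Real.sqrt ((N * |y k|) ^ 2) := Real.sqrt_le_sqrt (h1.trans h2)
      _ = N * |y k| := Real.sqrt_sq (by positivity)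
  have key : r₀ / N * ‖y‖ ≤ r₀ * |y k| := by
    calc r₀ / N * ‖y‖ ≤ r₀ / N * (N * |y k|) := by
          apply mul_le_mul_of_nonneg_left hnorm (by positivity)
      _ = r₀ * |y k| := by field_simp
  refine key.trans ?_
  set a := ⟪y, x - x₀⟫ with ha
  have hsub : ⟪y, x - x₀ - r₀ • EuclideanSpace.single k 1⟫ = a - r₀ * y k := by
    rw [inner_sub_right, inner_smul_right, EuclideanSpace.inner_single_right]
    simp [ha]
  have hadd : ⟪y, x - x₀ + r₀ • EuclideanSpace.single k 1⟫ = a + r₀ * y k := by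
    rw [inner_add_right, inner_smul_right, EuclideanSpace.inner_single_right]
    simp [ha]
  rw [hsub, hadd]
  have h2 : 2 * (r₀ * |y k|) ≤ |a - r₀ * y k| + |a + r₀ * y k| := by
    have htri : |(a + r₀ * y k) - (a - r₀ * y k)| ≤ |a + r₀ * y k| + |a - r₀ * y k| :=
      abs_sub _ _
    have heq : |(a + r₀ * y k) - (a - r₀ * y k)| = 2 * (r₀ * |y k|) := by
      have h4 : (a + r₀ * y k) - (a - r₀ * y k) = 2 * (r₀ * y k) := by ring
      rw [h4, abs_mul, abs_mul, abs_of_pos hr₀]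
      norm_num
    linarith
  rcases le_total (r₀ * |y k|) |a - r₀ * y k| with h | h
  · exact le_max_of_le_left h
  · refine le_max_of_le_right ?_
    linarith [abs_nonneg (a - r₀ * y k)]
end
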